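/- Translation validity: for every partial epistemic frame M with valuation (i.e. a partial epistemic model), every world w ∈ M, and every KB4 formula Φ, we have M,w ⊨ Φ if and only if η(M), w ⊨_e t(Φ), where η(M) is regarded as a chromatic hypergraph model with empty sets of agent atomic propositions and the same valuation on hyperedges. -/

import Mathlib

/-! ## Syntax of the two-level chromatic hypergraph logic 2CH -/

mutual
/-- Agent formulas of sort `a`, for each agent `a : A`. -/
inductive AForm (A : Type) (APa : A → Type) (APe : Type) : A → Type where
  | atom {a : A} : APa a → AForm A APa APe a
  | bot  {a : A} : AForm A APa APe a
  | neg  {a : A} : AForm A APa APe a → AForm A APa APe a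
  | and  {a : A} : AForm A APa APe a → AForm A APa APe a → AForm A APa APe a
  | dia  (a : A) : WForm A APa APe → AForm A APa APe a

/-- World formulas. -/
inductive WForm (A : Type) (APa : A → Type) (APe : Type) : Type where
  | atom : APe → WForm A APa APe
  | bot  : WForm A APa APe
  | neg  : WForm A APa APe → WForm A APa APe
  | and  : WForm A APa APe → WForm A APa APe → WForm A APa APe
  | exi  (a : A) : AForm A APa APe a → WForm A APa APe
end

variable {A : Type} {APa : A → Type} {APe : Type}

/-- Implication of agent formulas. -/
def implA {a : A} (φ ψ : AForm A APa APe a) : AForm A APa APe a := .neg (.and φ (.neg ψ))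
/-- Disjunction of agent formulas. -/
def orA {a : A} (φ ψ : AForm A APa APe a) : AForm A APa APe a := .neg (.and (.neg φ) (.neg ψ))
/-- `⊤` as an agent formula. -/
def topA (a : A) : AForm A APa APe a := .neg .bot
/-- Implication of world formulas. -/
def implW (Φ Ψ : WForm A APa APe) : WForm A APa APe := .neg (.and Φ (.neg Ψ))
/-- Disjunction of world formulas. -/
def orW (Φ Ψ : WForm A APa APe) : WForm A APa APe := .neg (.and (.neg Φ) (.neg Ψ))
/-- The dual modality `□_a Φ := ¬◇_a ¬Φ`. -/
def boxF (a : A) (Φ : WForm A APa APe) : AForm A APa APe a := .neg (.dia a (.neg Φ))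
/-- The dual modality `A_a φ := ¬E_a ¬φ`. -/
def allF (a : A) (φ : AForm A APa APe a) : WForm A APa APe := .neg (.exi a (.neg φ))
/-- Finite disjunction of a list of world formulas. -/
def listOrW : List (WForm A APa APe) → WForm A APa APe
  | [] => .bot
  | Φ :: rest => orW Φ (listOrW rest)

/-- The non-emptiness axiom `⋁_{a∈A} E_a ⊤`. -/
noncomputable def neAxiom (A : Type) [Fintype A] (APa : A → Type) (APe : Type) : WForm A APa APe :=
  listOrW (((Finset.univ : Finset A).toList).map fun a => WForm.exi a (topA a))

/-- `φ` is an instance of a classical propositional tautology (agent sort):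
every Boolean valuation respecting `⊥`, `¬`, `∧` makes it true. -/
def ATaut {a : A} (φ : AForm A APa APe a) : Prop :=
  ∀ v : AForm A APa APe a → Bool,
    v .bot = false →
    (∀ ψ : AForm A APa APe a, v ψ.neg = !(v ψ)) →
    (∀ ψ χ : AForm A APa APe a, v (ψ.and χ) = (v ψ && v χ)) →
    v φ = true

/-- `Φ` is an instance of a classical propositional tautology (world sort). -/
def WTaut (Φ : WForm A APa APe) : Prop :=
  ∀ v : WForm A APa APe → Bool,
    v .bot = false →
    (∀ Ψ : WForm A APa APe, v Ψ.neg = !(v Ψ)) →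
    (∀ Ψ Χ : WForm A APa APe, v (Ψ.and Χ) = (v Ψ && v Χ)) →
    v Φ = true

/-! ## The proof system of 2CH -/

mutual
/-- Derivability `⊢_a` of agent formulas of sort `a`. -/
inductive ProveA (A : Type) [Fintype A] (APa : A → Type) (APe : Type) :
    ∀ {a : A}, AForm A APa APe a → Prop where
  | taut {a : A} {φ : AForm A APa APe a} : ATaut φ → ProveA A APa APe φ
  | mp {a : A} {φ ψ : AForm A APa APe a} :
      ProveA A APa APe (implA φ ψ) → ProveA A APa APe φ → ProveA A APa APe ψ
  | nec {a : A} {Φ : WForm A APa APe} :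
      ProveE A APa APe Φ → ProveA A APa APe (boxF a Φ)
  | monoDia {a : A} {Φ Ψ : WForm A APa APe} :
      ProveE A APa APe (implW Φ Ψ) →
      ProveA A APa APe (implA (AForm.dia a Φ) (AForm.dia a Ψ))
  | monoBox {a : A} {Φ Ψ : WForm A APa APe} :
      ProveE A APa APe (implW Φ Ψ) →
      ProveA A APa APe (implA (boxF a Φ) (boxF a Ψ))
  | adj1 {a : A} {Φ : WForm A APa APe} {ψ : AForm A APa APe a} :
      ProveE A APa APe (implW Φ (allF a ψ)) →
      ProveA A APa APe (implA (AForm.dia a Φ) ψ)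
  | adj2 {a : A} {φ : AForm A APa APe a} {Ψ : WForm A APa APe} :
      ProveE A APa APe (implW (WForm.exi a φ) Ψ) →
      ProveA A APa APe (implA φ (boxF a Ψ))
  | surj {a : A} {φ : AForm A APa APe a} :
      ProveA A APa APe (implA φ (AForm.dia a (WForm.exi a φ)))
  | func {a : A} {φ : AForm A APa APe a} :
      ProveA A APa APe (implA (AForm.dia a (WForm.exi a φ)) φ)

/-- Derivability `⊢_e` of world formulas. -/
inductive ProveE (A : Type) [Fintype A] (APa : A → Type) (APe : Type) :
    WForm A APa APe → Prop where
  | taut {Φ : WForm A APa APe} : WTaut Φ → ProveE A APa APe Φ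
  | mp {Φ Ψ : WForm A APa APe} :
      ProveE A APa APe (implW Φ Ψ) → ProveE A APa APe Φ → ProveE A APa APe Ψ
  | nec {a : A} {φ : AForm A APa APe a} :
      ProveA A APa APe φ → ProveE A APa APe (allF a φ)
  | monoExi {a : A} {φ ψ : AForm A APa APe a} :
      ProveA A APa APe (implA φ ψ) →
      ProveE A APa APe (implW (WForm.exi a φ) (WForm.exi a ψ))
  | monoAll {a : A} {φ ψ : AForm A APa APe a} :
      ProveA A APa APe (implA φ ψ) →
      ProveE A APa APe (implW (allF a φ) (allF a ψ))
  | adj1 {a : A} {Φ : WForm A APa APe} {ψ : AForm A APa APe a} :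
      ProveA A APa APe (implA (AForm.dia a Φ) ψ) →
      ProveE A APa APe (implW Φ (allF a ψ))
  | adj2 {a : A} {φ : AForm A APa APe a} {Ψ : WForm A APa APe} :
      ProveA A APa APe (implA φ (boxF a Ψ)) →
      ProveE A APa APe (implW (WForm.exi a φ) Ψ)
  | nonempty : ProveE A APa APe (neAxiom A APa APe)
end

/-! ## Chromatic hypergraphs and their models -/

/-- A chromatic hypergraph over the set of agents `A`. -/
structure ChromHyp (A : Type) where
  /-- hyperedges (worlds) -/
  E : Type
  /-- views of agent `a` -/
  V : A → Type
  /-- the surjective partial function assigning to a hyperedge the view of agent `a` in it -/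
  proj : ∀ a : A, E → Option (V a)
  surj : ∀ (a : A) (v : V a), ∃ e : E, proj a e = some v
  edge_nonempty : ∀ e : E, ∃ a : A, (proj a e).isSome

/-- A chromatic hypergraph model: a chromatic hypergraph together with valuations. -/
structure ChromHypModel (A : Type) (APa : A → Type) (APe : Type) extends ChromHyp A where
  valA : ∀ a : A, APa a → Set (V a)
  valE : APe → Set E

mutual
/-- Satisfaction `H, v ⊨_a φ` of an agent formula at a view of agent `a`. -/
def SatA (H : ChromHypModel A APa APe) : ∀ (a : A), H.V a → AForm A APa APe a → Prop
  | a, v, .atom p => v ∈ H.valA a p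
  | _, _, .bot => False
  | a, v, .neg φ => ¬ SatA H a v φ
  | a, v, .and φ ψ => SatA H a v φ ∧ SatA H a v ψ
  | a, v, .dia _ Φ => ∃ e : H.E, H.proj a e = some v ∧ SatE H e Φ

/-- Satisfaction `H, e ⊨_e Φ` of a world formula at a hyperedge. -/
def SatE (H : ChromHypModel A APa APe) : H.E → WForm A APa APe → Prop
  | e, .atom p => e ∈ H.valE p
  | _, .bot => False
  | e, .neg Φ => ¬ SatE H e Φ
  | e, .and Φ Ψ => SatE H e Φ ∧ SatE H e Ψ
  | e, .exi a φ => ∃ v : H.V a, H.proj a e = some v ∧ SatA H a v φ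
end


/-! ## Partial epistemic frames and the construction `η` -/

/-- A partial epistemic frame over the set of agents `A`: a set of worlds with a family
of partial equivalence relations, such that every world is related to itself by `~_a`
for at least one agent `a`. -/
structure PEFrame (A : Type) where
  /-- worlds -/
  W : Type
  /-- the partial indistinguishability relation `~_a` of agent `a` -/
  rel : A → W → W → Prop
  symm : ∀ (a : A) (w w' : W), rel a w w' → rel a w' w
  trans : ∀ (a : A) (w₁ w₂ w₃ : W), rel a w₁ w₂ → rel a w₂ w₃ → rel a w₁ w₃
  refl_exists : ∀ w : W, ∃ a : A, rel a w w

/-- The setoid of `~_a`-equivalence on the domain `{w // w ~_a w}` of the partial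
equivalence relation `~_a`. -/
def partSetoid {A : Type} (M : PEFrame A) (a : A) : Setoid {w : M.W // M.rel a w w} where
  r x y := M.rel a x.val y.val
  iseqv := ⟨fun x => x.2, fun h => M.symm _ _ _ h, fun h₁ h₂ => M.trans _ _ _ _ h₁ h₂⟩

open Classical in
/-- The construction `η`: from a partial epistemic frame to a chromatic hypergraph.
The hyperedges are the worlds, the `a`-views are the equivalence classes of `~_a`,
and `proj_a(w) = [w]_a`, defined exactly when `w ~_a w`. -/
noncomputable def etaHyp {A : Type} (M : PEFrame A) : ChromHyp A where
  E := M.W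
  V a := Quotient (partSetoid M a)
  proj a w := if h : M.rel a w w then some (Quotient.mk (partSetoid M a) ⟨w, h⟩) else none
  surj a v := by
    induction v using Quotient.ind with
    | _ x =>
      refine ⟨x.val, ?_⟩
      try dsimp only
      rw [dif_pos x.2]
  edge_nonempty e := by
    obtain ⟨a, h⟩ := M.refl_exists e
    exact ⟨a, by (try dsimp only); rw [dif_pos h]; rfl⟩

/-! ## KB4 formulas, their semantics, and the translation into 2CH -/

/-- Formulas of the epistemic logic KB4. -/
inductive KB4Form (A : Type) (APe : Type) : Type where
  | atom : APe → KB4Form A APe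
  | bot  : KB4Form A APe
  | neg  : KB4Form A APe → KB4Form A APe
  | and  : KB4Form A APe → KB4Form A APe → KB4Form A APe
  | know (a : A) : KB4Form A APe → KB4Form A APe

/-- Satisfaction of KB4 formulas in a partial epistemic model
(a partial epistemic frame with a valuation on worlds). -/
def SatKB4 {A : Type} {APe : Type} (M : PEFrame A) (ℓ : APe → Set M.W) :
    M.W → KB4Form A APe → Prop
  | w, .atom p => w ∈ ℓ p
  | _, .bot => False
  | w, .neg Φ => ¬ SatKB4 M ℓ w Φ
  | w, .and Φ Ψ => SatKB4 M ℓ w Φ ∧ SatKB4 M ℓ w Ψ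
  | w, .know a Φ => ∀ w' : M.W, M.rel a w w' → SatKB4 M ℓ w' Φ

/-- The translation `t` of KB4 formulas into world formulas of 2CH, with the KB4 atomic
propositions as world atomic propositions and empty sets of agent atomic propositions:
`t(K_a Φ) = A_a □_a t(Φ)`. -/
def trKB4 {A : Type} {APe : Type} : KB4Form A APe → WForm A (fun _ => Empty) APe
  | .atom p => .atom p
  | .bot => .bot
  | .neg Φ => .neg (trKB4 Φ)
  | .and Φ Ψ => .and (trKB4 Φ) (trKB4 Ψ)
  | .know a Φ => allF a (boxF a (trKB4 Φ))

/-- A chromatic hypergraph model built from a chromatic hypergraph and valuations. -/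
def mkModel {A : Type} {APa : A → Type} {APe : Type} (Hy : ChromHyp A)
    (valA : ∀ a : A, APa a → Set (Hy.V a)) (valE : APe → Set Hy.E) :
    ChromHypModel A APa APe :=
  { toChromHyp := Hy, valA := valA, valE := valE }

/-- `η(M)` regarded as a chromatic hypergraph model, with empty sets of agent
atomic propositions and the same valuation on hyperedges (= worlds of `M`). -/
noncomputable def etaModel {A : Type} {APe : Type} (M : PEFrame A) (ℓ : APe → Set M.W) :
    ChromHypModel A (fun _ => Empty) APe :=
  mkModel (etaHyp M) (fun _ p => p.elim) ℓ

/-!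
In any chromatic hypergraph, `A_a □_a Ψ` holds at a hyperedge `e` iff `Ψ` holds at every
hyperedge sharing `e`'s `a`-view; in `η(M)` two worlds share an `a`-view exactly when they are
`~_a`-related. So the translation of `K_a` is evaluated over the same worlds as `K_a` itself.
-/

def ChromHyp.SameView (H : ChromHyp A) (a : A) (e e' : H.E) : Prop :=
  ∃ v : H.V a, H.proj a e = some v ∧ H.proj a e' = some v

theorem satE_allF_boxF_iff (H : ChromHypModel A APa APe) (a : A) (e : H.E)
    (Φ : WForm A APa APe) :
    SatE H e (allF a (boxF a Φ)) ↔
      ∀ e' : H.E, H.toChromHyp.SameView a e e' → SatE H e' Φ := by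
  simp only [allF, boxF, SatE, SatA, not_exists, not_and, not_not, ChromHyp.SameView]
  exact ⟨fun h e' ⟨v, hv, hv'⟩ => h v hv e' hv', fun h v hv e' hv' => h e' ⟨v, hv, hv'⟩⟩

namespace PEFrame

variable (M : PEFrame A) {a : A} {w w' : M.W}

theorem rel_self_left (h : M.rel a w w') : M.rel a w w :=
  M.trans a w w' w h (M.symm a w w' h)

theorem rel_self_right (h : M.rel a w w') : M.rel a w' w' :=
  M.trans a w' w w' (M.symm a w w' h) h

end PEFrame

section Eta

variable (M : PEFrame A) {a : A} {w w' : M.W}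

theorem etaHyp_proj_of_rel (h : M.rel a w w) :
    (etaHyp M).proj a w = some (Quotient.mk (partSetoid M a) ⟨w, h⟩) :=
  dif_pos h

theorem rel_self_of_etaHyp_proj_eq_some {v : (etaHyp M).V a}
    (h : (etaHyp M).proj a w = some v) : M.rel a w w := by
  by_contra hw
  rw [show (etaHyp M).proj a w = none from dif_neg hw] at h
  cases h

theorem etaHyp_sameView_iff : (etaHyp M).SameView a w w' ↔ M.rel a w w' := by
  constructor
  · rintro ⟨v, hv, hv'⟩
    rw [etaHyp_proj_of_rel M (rel_self_of_etaHyp_proj_eq_some M hv)] at hv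
    rw [etaHyp_proj_of_rel M (rel_self_of_etaHyp_proj_eq_some M hv')] at hv'
    exact Quotient.exact (Option.some_injective _ (hv.trans hv'.symm))
  · intro h
    refine ⟨_, etaHyp_proj_of_rel M (M.rel_self_left h), ?_⟩
    rw [etaHyp_proj_of_rel M (M.rel_self_right h)]
    exact congrArg some (Quotient.sound (M.symm a w w' h))

end Eta

/-- **Translation validity**: for every partial epistemic model `(M, ℓ)`, every world `w`,
and every KB4 formula `Φ`, `M, w ⊨ Φ` iff `η(M), w ⊨_e t(Φ)`. -/
theorem translation_validity (A : Type) [Fintype A] (APe : Type)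
    (M : PEFrame A) (ℓ : APe → Set M.W) (w : M.W) (Φ : KB4Form A APe) :
    SatKB4 M ℓ w Φ ↔ SatE (etaModel M ℓ) w (trKB4 Φ) := by
  induction Φ generalizing w with
  | atom p => rfl
  | bot => rfl
  | neg Φ ih => exact not_congr (ih w)
  | and Φ Ψ ihΦ ihΨ => exact and_congr (ihΦ w) (ihΨ w)
  | know a Φ ih =>
    refine Iff.trans ?_ (satE_allF_boxF_iff (etaModel M ℓ) a w (trKB4 Φ)).symm
    exact forall_congr' fun w' => imp_congr (etaHyp_sameView_iff M).symm (ih w')
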